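/- In the affine nilTemperley-Lieb algebra on n generators, the elements \tilde{e}_r^n (sums of cyclically increasing monomials of length r) and \tilde{h}_r^n (sums of cyclically decreasing monomials of length r) satisfy \tilde{e}_i^n \cdot \tilde{h}_j^n = 0 whenever i + j > n. -/

import Mathlib

/-!
If `i + j > n`, an `i`-subset `S` and a `j`-subset `T` of `ℤ/n` share an element `k`. Reading
both cyclic words from the same gap shows that the decreasing word of `T` is the reverse of its
increasing word, so the increasing word of `S` ends in `k u` and the decreasing word of `T`
begins with `v.reverse k`, where `u` and `v` are subwords of the cyclic run `k+1, …, k+n-2`.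
Hence every product of monomials contains the factor `aₖ a_u a_{v.reverse} aₖ`, which vanishes by
induction on the run: if `k+1` starts both `u` and `v`, the middle is a factor of the same shape
for `k+1`; otherwise `aₖ` commutes past `a_u` or `a_{v.reverse}` and meets `aₖ` or `a_{k+1} aₖ`.
-/

open scoped BigOperators

namespace NilTL

/-- The defining relations of the affine nilTemperley-Lieb algebra on `n` generators:
`aᵢ² = 0`, `aᵢaⱼ = aⱼaᵢ` when `i` and `j` are not cyclically adjacent mod `n`, and
`aᵢa_{i+1}aᵢ = a_{i+1}aᵢa_{i+1} = 0` (indices mod `n`). -/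
inductive TLRel (n : ℕ) [NeZero n] :
    FreeAlgebra ℤ (Fin n) → FreeAlgebra ℤ (Fin n) → Prop
  | sq (i : Fin n) : TLRel n (FreeAlgebra.ι ℤ i * FreeAlgebra.ι ℤ i) 0
  | comm (i j : Fin n) (h1 : i ≠ j + 1) (h2 : j ≠ i + 1) :
      TLRel n (FreeAlgebra.ι ℤ i * FreeAlgebra.ι ℤ j)
        (FreeAlgebra.ι ℤ j * FreeAlgebra.ι ℤ i)
  | braid1 (i : Fin n) :
      TLRel n (FreeAlgebra.ι ℤ i * FreeAlgebra.ι ℤ (i + 1) * FreeAlgebra.ι ℤ i) 0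
  | braid2 (i : Fin n) :
      TLRel n (FreeAlgebra.ι ℤ (i + 1) * FreeAlgebra.ι ℤ i * FreeAlgebra.ι ℤ (i + 1)) 0

/-- The affine nilTemperley-Lieb algebra `n\widehat{TL}ₙ`. -/
abbrev TL (n : ℕ) [NeZero n] := RingQuot (TLRel n)

/-- The generators `aᵢ` of the affine nilTemperley-Lieb algebra. -/
noncomputable def a (n : ℕ) [NeZero n] (i : Fin n) : TL n :=
  RingQuot.mkAlgHom ℤ (TLRel n) (FreeAlgebra.ι ℤ i)

/-- A canonical "gap" of a proper subset `S ⊊ ℤ/n`: an element of the complement. -/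
noncomputable def gap (n : ℕ) [NeZero n] (S : Finset (Fin n)) : Fin n :=
  if h : Sᶜ.Nonempty then Sᶜ.min' h else 0

/-- The cyclically decreasing word on a proper subset `S ⊊ ℤ/n`: list the elements of `S`
in the cyclically decreasing order `g - 1, g - 2, …, g + 1` starting just below a gap `g ∉ S`,
so that whenever `i` and `i+1` both occur in `S`, the letter `i+1` appears before `i`. -/
noncomputable def decWord (n : ℕ) [NeZero n] (S : Finset (Fin n)) : List (Fin n) :=
  ((List.range (n - 1)).map fun t => gap n S - 1 - (Fin.ofNat n t)).filter
    (fun x => decide (x ∈ S))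

/-- The cyclically increasing word on a proper subset `S ⊊ ℤ/n`. -/
noncomputable def incWord (n : ℕ) [NeZero n] (S : Finset (Fin n)) : List (Fin n) :=
  ((List.range (n - 1)).map fun t => gap n S + 1 + (Fin.ofNat n t)).filter
    (fun x => decide (x ∈ S))

/-- `h̃ᵣⁿ`, the sum of all cyclically decreasing monomials of length `r` (for `1 ≤ r ≤ n-1`,
these are indexed by the subsets of `ℤ/n` of size `r`). -/
noncomputable def hh (n : ℕ) [NeZero n] (r : ℕ) : TL n :=
  ∑ S ∈ Finset.powersetCard r (Finset.univ : Finset (Fin n)),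
    ((decWord n S).map (a n)).prod

/-- `ẽᵣⁿ`, the sum of all cyclically increasing monomials of length `r`. -/
noncomputable def ee (n : ℕ) [NeZero n] (r : ℕ) : TL n :=
  ∑ S ∈ Finset.powersetCard r (Finset.univ : Finset (Fin n)),
    ((incWord n S).map (a n)).prod

section

open Fin.NatCast Fin.CommRing

variable {n : ℕ} [NeZero n]

lemma a_mul_self (i : Fin n) : a n i * a n i = 0 := by
  simpa [a] using RingQuot.mkAlgHom_rel ℤ (TLRel.sq (n := n) i)

lemma commute_a {i j : Fin n} (h₁ : i ≠ j + 1) (h₂ : j ≠ i + 1) : Commute (a n i) (a n j) := by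
  simpa [a, Commute, SemiconjBy] using RingQuot.mkAlgHom_rel ℤ (TLRel.comm i j h₁ h₂)

lemma a_mul_a_add_one_mul_a (i : Fin n) : a n i * a n (i + 1) * a n i = 0 := by
  simpa [a] using RingQuot.mkAlgHom_rel ℤ (TLRel.braid1 (n := n) i)

noncomputable def wordProd (w : List (Fin n)) : TL n := (w.map (a n)).prod

@[simp] lemma wordProd_nil : wordProd ([] : List (Fin n)) = 1 := rfl

@[simp] lemma wordProd_cons (i : Fin n) (w : List (Fin n)) :
    wordProd (i :: w) = a n i * wordProd w := by
  simp [wordProd]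

@[simp] lemma wordProd_append (w w' : List (Fin n)) :
    wordProd (w ++ w') = wordProd w * wordProd w' := by
  simp [wordProd]

lemma commute_a_wordProd {k : Fin n} {w : List (Fin n)}
    (h : ∀ j ∈ w, Commute (a n k) (a n j)) : Commute (a n k) (wordProd w) :=
  Commute.list_prod_right _ _ (by simpa using h)

def arc (k : Fin n) (m : ℕ) : List (Fin n) := (List.range m).map fun x : ℕ => k + 1 + (x : Fin n)

@[simp] lemma arc_zero (k : Fin n) : arc k 0 = [] := rfl

lemma arc_succ (k : Fin n) (m : ℕ) : arc k (m + 1) = (k + 1) :: arc (k + 1) m := by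
  simp only [arc, List.range_succ_eq_map, List.map_cons, List.map_map, Nat.cast_zero, add_zero]
  congr 1
  refine List.map_congr_left fun x _ => ?_
  simp only [Function.comp_apply, Nat.succ_eq_add_one, Nat.cast_add, Nat.cast_one]
  ring

lemma arc_add_one_add (k : Fin n) (m m' : ℕ) :
    arc k (m + 1 + m') = arc k m ++ (k + 1 + m) :: arc (k + 1 + m) m' := by
  induction m generalizing k with
  | zero => simpa [Nat.add_comm 1] using arc_succ k m'
  | succ m ih =>
    rw [Nat.add_right_comm, arc_succ, ih, arc_succ, List.cons_append]
    push_cast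
    ring_nf

lemma arc_sublist_arc (k : Fin n) {m m' : ℕ} (h : m ≤ m') : (arc k m).Sublist (arc k m') :=
  (List.range_sublist.2 h).map _

lemma commute_a_of_mem_arc {k j : Fin n} {m : ℕ} (hj : j ∈ arc (k + 1) m) (hm : m + 3 ≤ n) :
    Commute (a n k) (a n j) := by
  obtain ⟨x, hx, rfl⟩ := List.mem_map.1 hj
  have hx : x < m := List.mem_range.1 hx
  have hcast (y : ℕ) (hy : y < n) (h : (y : Fin n) = 0) : y = 0 := by
    simpa [Fin.val_cast_of_lt hy] using congrArg Fin.val h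
  apply commute_a
  · intro h
    have := hcast (x + 3) (by omega) (by push_cast; linear_combination -h)
    omega
  · intro h
    have := hcast (x + 1) (by omega) (by push_cast; linear_combination h)
    omega

lemma a_mul_wordProd_mul_a_eq_zero {m : ℕ} (hm : m ≤ n - 2) {k : Fin n} {u : List (Fin n)}
    (hu : u.Sublist (arc k m)) : a n k * wordProd u * a n k = 0 := by
  cases m with
  | zero => simp_all [a_mul_self]
  | succ m =>
    rw [arc_succ] at hu
    rcases List.sublist_cons_iff.1 hu with hu' | ⟨u', rfl, hu'⟩ <;>
      have hc := commute_a_wordProd fun j hj => commute_a_of_mem_arc (hu'.subset hj) (by omega)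
    · rw [hc.eq, mul_assoc, a_mul_self, mul_zero]
    · rw [wordProd_cons, mul_assoc, mul_assoc, ← hc.eq, ← mul_assoc, ← mul_assoc,
        a_mul_a_add_one_mul_a, zero_mul]

lemma a_mul_wordProd_reverse_mul_a_eq_zero {m : ℕ} (hm : m ≤ n - 2) {k : Fin n}
    {v : List (Fin n)} (hv : v.Sublist (arc k m)) : a n k * wordProd v.reverse * a n k = 0 := by
  cases m with
  | zero => simp_all [a_mul_self]
  | succ m =>
    rw [arc_succ] at hv
    rcases List.sublist_cons_iff.1 hv with hv' | ⟨v', rfl, hv'⟩ <;>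
      have hc := commute_a_wordProd fun j hj =>
        commute_a_of_mem_arc (hv'.subset (List.mem_reverse.1 hj)) (by omega)
    · rw [hc.eq, mul_assoc, a_mul_self, mul_zero]
    · rw [List.reverse_cons, wordProd_append, wordProd_cons, wordProd_nil, mul_one, ← mul_assoc,
        hc.eq, mul_assoc, mul_assoc, ← mul_assoc (a n k), a_mul_a_add_one_mul_a, mul_zero]

lemma a_mul_wordProd_mul_wordProd_reverse_mul_a_eq_zero {m : ℕ} (hm : m ≤ n - 2) {k : Fin n}
    {u v : List (Fin n)} (hu : u.Sublist (arc k m)) (hv : v.Sublist (arc k m)) :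
    a n k * wordProd u * wordProd v.reverse * a n k = 0 := by
  induction m generalizing k u v with
  | zero => simp_all [a_mul_self]
  | succ m ih =>
    have hu₀ := hu
    have hv₀ := hv
    rw [arc_succ] at hu hv
    rcases List.sublist_cons_iff.1 hu with hu' | ⟨u', rfl, hu'⟩
    · have hc := commute_a_wordProd fun j hj => commute_a_of_mem_arc (hu'.subset hj) (by omega)
      rw [hc.eq, mul_assoc (wordProd u), mul_assoc,
        a_mul_wordProd_reverse_mul_a_eq_zero hm hv₀, mul_zero]
    rcases List.sublist_cons_iff.1 hv with hv' | ⟨v', rfl, hv'⟩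
    · have hc := commute_a_wordProd fun j hj =>
        commute_a_of_mem_arc (hv'.subset (List.mem_reverse.1 hj)) (by omega)
      rw [mul_assoc _ (wordProd _), ← hc.eq, ← mul_assoc,
        a_mul_wordProd_mul_a_eq_zero hm hu₀, zero_mul]
    · calc _ = a n k * (a n (k + 1) * wordProd u' * wordProd v'.reverse * a n (k + 1)) *
            a n k := by
            simp only [List.reverse_cons, wordProd_append, wordProd_cons, wordProd_nil, mul_one,
              mul_assoc]
        _ = 0 := by rw [ih (by omega) hu' hv', mul_zero, zero_mul]

lemma map_range_sub_eq_reverse_arc (g : Fin n) (m : ℕ) :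
    (List.range m).map (fun x : ℕ => g - 1 - (x : Fin n)) =
      (arc (g - 1 - (m : Fin n)) m).reverse := by
  induction m generalizing g with
  | zero => rfl
  | succ m ih =>
    have h := arc_add_one_add (g - 1 - ((m + 1 : ℕ) : Fin n)) m 0
    rw [Nat.add_zero, arc_zero] at h
    rw [h, List.reverse_append, List.reverse_singleton, List.singleton_append,
      List.range_succ_eq_map, List.map_cons, List.map_map]
    congr 1
    · push_cast
      ring
    · rw [show g - 1 - ((m + 1 : ℕ) : Fin n) = g - 1 - 1 - (m : Fin n) by push_cast; ring, ← ih]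
      refine List.map_congr_left fun x _ => ?_
      simp only [Function.comp_apply, Nat.succ_eq_add_one, Nat.cast_add, Nat.cast_one]
      ring

lemma incWord_eq_filter_arc (S : Finset (Fin n)) :
    incWord n S = (arc (gap n S) (n - 1)).filter (fun x => decide (x ∈ S)) := rfl

lemma decWord_eq_reverse_incWord (S : Finset (Fin n)) : decWord n S = (incWord n S).reverse := by
  have hn : (((n - 1 : ℕ) + 1 : ℕ) : Fin n) = 0 := by
    rw [Nat.sub_add_cancel NeZero.one_le, Fin.natCast_self]
  have hg : gap n S - 1 - ((n - 1 : ℕ) : Fin n) = gap n S := by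
    push_cast at hn
    linear_combination -hn
  show ((List.range (n - 1)).map fun x : ℕ => gap n S - 1 - (x : Fin n)).filter _ = _
  rw [map_range_sub_eq_reverse_arc, hg, List.filter_reverse, incWord_eq_filter_arc]

lemma gap_not_mem {S : Finset (Fin n)} (hS : Sᶜ.Nonempty) : gap n S ∉ S := by
  simpa [gap, hS] using Sᶜ.min'_mem hS

lemma exists_eq_add_one_add {g k : Fin n} (h : k ≠ g) : ∃ t : ℕ, t + 2 ≤ n ∧ k = g + 1 + t := by
  refine ⟨(k - g - 1).val, ?_, by simp⟩
  have hlt := (k - g - 1).isLt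
  by_contra ht
  have : (((k - g - 1).val + 1 : ℕ) : Fin n) = 0 := by
    rw [show (k - g - 1).val + 1 = n by omega, Fin.natCast_self]
  push_cast at this
  exact h (by linear_combination this)

lemma exists_incWord_eq_append {S : Finset (Fin n)} (hS : Sᶜ.Nonempty) {k : Fin n}
    (hk : k ∈ S) : ∃ A u, u.Sublist (arc k (n - 2)) ∧ incWord n S = A ++ k :: u := by
  obtain ⟨t, ht, rfl⟩ := exists_eq_add_one_add (ne_of_mem_of_not_mem hk (gap_not_mem hS))
  refine ⟨(arc (gap n S) t).filter (fun x => decide (x ∈ S)),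
    (arc (gap n S + 1 + (t : Fin n)) (n - 2 - t)).filter (fun x => decide (x ∈ S)),
    List.filter_sublist.trans (arc_sublist_arc _ (Nat.sub_le (n - 2) t)), ?_⟩
  rw [incWord_eq_filter_arc, show n - 1 = t + 1 + (n - 2 - t) by omega, arc_add_one_add,
    List.filter_append, List.filter_cons_of_pos (by simpa using hk)]

lemma wordProd_incWord_mul_wordProd_decWord {S T : Finset (Fin n)} (hS : Sᶜ.Nonempty)
    (hT : Tᶜ.Nonempty) (hST : (S ∩ T).Nonempty) :
    wordProd (incWord n S) * wordProd (decWord n T) = 0 := by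
  obtain ⟨k, hk⟩ := hST
  obtain ⟨A, u, hu, hA⟩ := exists_incWord_eq_append hS (Finset.mem_inter.1 hk).1
  obtain ⟨B, v, hv, hB⟩ := exists_incWord_eq_append hT (Finset.mem_inter.1 hk).2
  rw [decWord_eq_reverse_incWord, hA, hB]
  calc _ = wordProd A * (a n k * wordProd u * wordProd v.reverse * a n k) *
        wordProd B.reverse := by
        simp only [List.reverse_append, List.reverse_cons, wordProd_append, wordProd_cons,
          wordProd_nil, mul_one, mul_assoc]
    _ = 0 := by
      rw [a_mul_wordProd_mul_wordProd_reverse_mul_a_eq_zero le_rfl hu hv, mul_zero, zero_mul]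

end

theorem stmt10_general (n : ℕ) [NeZero n] (i j : ℕ)
    (hi2 : i ≤ n - 1) (hj2 : j ≤ n - 1)
    (hij : n < i + j) :
    ee n i * hh n j = 0 := by
  rw [ee, hh, Finset.sum_mul_sum]
  refine Finset.sum_eq_zero fun S hS => Finset.sum_eq_zero fun T hT => ?_
  rw [Finset.mem_powersetCard_univ] at hS hT
  have compl_nonempty {U : Finset (Fin n)} (hU : U.card ≤ n - 1) : Uᶜ.Nonempty := by
    rw [← Finset.card_pos, Finset.card_compl, Fintype.card_fin]
    omega
  exact wordProd_incWord_mul_wordProd_decWord (compl_nonempty (hS.le.trans hi2))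
    (compl_nonempty (hT.le.trans hj2))
    (Finset.inter_nonempty_of_card_lt_card_add_card (Finset.subset_univ S)
      (Finset.subset_univ T) (by simp [hS, hT, hij]))

/-- in the affine nilTemperley-Lieb algebra on `n` generators,
`ẽᵢⁿ · h̃ⱼⁿ = 0` whenever `i + j > n`. -/
theorem stmt10 (n : ℕ) [NeZero n] (i j : ℕ)
    (hi1 : 1 ≤ i) (hi2 : i ≤ n - 1) (hj1 : 1 ≤ j) (hj2 : j ≤ n - 1)
    (hij : n < i + j) :
    ee n i * hh n j = 0 :=
  stmt10_general n i j hi2 hj2 hij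

end NilTL
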